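/- arXiv:2207.05308 — 6 statements merged into one kernel-verified Lean document; each statement's English description precedes it below -/
import Mathlib

section
/- For any real numbers a < b and any parameter ρ ∈ ℝ, the binary relation ⪯_ρ on [a,b], defined by x ⪯_ρ y iff (x = y) or (x < y and B(x,y) < ρ) or (y < x and ρ ≤ B(y,x)), is a total order (reflexive, antisymmetric, transitive, and total) on [a,b]. -/
/-!
On `u < v` inside `[a,b]`, `B(u,v)` is monotone in each argument. For every arrangement of three
points, transitivity (or the impossibility of that arrangement) then comes from comparing two values
of `B` along the monotone path `B(u,v) ≤ B(u,v') ≤ B(u',v')`.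
-/

/-- The interior-division point `B(u,v)` of the segment `[u,v] ⊆ [a,b]`. -/
noncomputable def B (a b u v : ℝ) : ℝ := (b * v - a * u) / (b - a + v - u)

/-- The binary relation `⪯_ρ` on `[a,b]`. -/
def rel (a b ρ x y : ℝ) : Prop :=
  x = y ∨ (x < y ∧ B a b x y < ρ) ∨ (y < x ∧ ρ ≤ B a b y x)

section
variable {a b : ℝ}

lemma B_monotoneOn_left {v : ℝ} (hab : a ≤ b) (hv : a ≤ v) :
    MonotoneOn (fun u => B a b u v) (Set.Iio v) := by
  intro u hu u' hu' huu'
  have hu : u < v := hu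
  have hu' : u' < v := hu'
  dsimp only
  rw [B, B, div_le_div_iff₀ (by linarith) (by linarith)]
  -- the cross-multiplied difference is `(b - a) (v - a) (u' - u)`
  nlinarith [mul_nonneg (mul_nonneg (sub_nonneg.2 hab) (sub_nonneg.2 hv)) (sub_nonneg.2 huu')]

lemma B_monotoneOn_right {u : ℝ} (hab : a ≤ b) (hu : u ≤ b) :
    MonotoneOn (B a b u) (Set.Ioi u) := by
  intro v hv v' hv' hvv'
  have hv : u < v := hv
  have hv' : u < v' := hv'
  rw [B, B, div_le_div_iff₀ (by linarith) (by linarith)]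
  -- the cross-multiplied difference is `(b - a) (b - u) (v' - v)`
  nlinarith [mul_nonneg (mul_nonneg (sub_nonneg.2 hab) (sub_nonneg.2 hu)) (sub_nonneg.2 hvv')]

lemma B_le_B {u u' v v' : ℝ} (hab : a ≤ b) (hu : u ≤ b) (hv' : a ≤ v') (huu' : u ≤ u')
    (hvv' : v ≤ v') (huv : u < v) (huv' : u' < v') : B a b u v ≤ B a b u' v' :=
  calc B a b u v ≤ B a b u v' :=
        B_monotoneOn_right hab hu huv (huv.trans_le hvv') hvv'
    _ ≤ B a b u' v' :=
        B_monotoneOn_left (v := v') hab hv' (huv.trans_le hvv') huv' huu'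

variable {ρ : ℝ}

lemma rel_refl (x : ℝ) : rel a b ρ x x := Or.inl rfl

lemma rel_antisymm {x y : ℝ} (hxy : rel a b ρ x y) (hyx : rel a b ρ y x) : x = y := by
  rcases hxy with rfl | ⟨hxy, h₁⟩ | ⟨hyx', h₁⟩ <;>
    rcases hyx with h | ⟨h, h₂⟩ | ⟨h, h₂⟩ <;> first | rfl | exact h.symm | linarith

lemma rel_total (x y : ℝ) : rel a b ρ x y ∨ rel a b ρ y x := by
  rcases lt_trichotomy x y with h | rfl | h
  · rcases lt_or_ge (B a b x y) ρ with hB | hB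
    · exact Or.inl (Or.inr (Or.inl ⟨h, hB⟩))
    · exact Or.inr (Or.inr (Or.inr ⟨h, hB⟩))
  · exact Or.inl (rel_refl x)
  · rcases lt_or_ge (B a b y x) ρ with hB | hB
    · exact Or.inr (Or.inr (Or.inl ⟨h, hB⟩))
    · exact Or.inl (Or.inr (Or.inr ⟨h, hB⟩))

lemma rel_trans {x y z : ℝ} (hx : x ∈ Set.Icc a b) (hy : y ∈ Set.Icc a b)
    (hz : z ∈ Set.Icc a b) (hxy : rel a b ρ x y) (hyz : rel a b ρ y z) : rel a b ρ x z := by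
  have hab : a ≤ b := hx.1.trans hx.2
  rcases hxy with rfl | ⟨hxy, h₁⟩ | ⟨hyx, h₁⟩
  · exact hyz
  · rcases hyz with rfl | ⟨hyz, h₂⟩ | ⟨hzy, h₂⟩
    · exact Or.inr (Or.inl ⟨hxy, h₁⟩)
    · have := B_le_B hab hx.2 hz.1 hxy.le le_rfl (hxy.trans hyz) hyz
      exact Or.inr (Or.inl ⟨hxy.trans hyz, by linarith⟩)
    · rcases lt_trichotomy x z with hxz | rfl | hzx
      · have := B_le_B hab hx.2 hy.1 le_rfl hzy.le hxz hxy
        exact Or.inr (Or.inl ⟨hxz, by linarith⟩)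
      · exact rel_refl x
      · have := B_le_B hab hz.2 hy.1 hzx.le le_rfl hzy hxy
        exact absurd h₂ (by linarith)
  · rcases hyz with rfl | ⟨hyz, h₂⟩ | ⟨hzy, h₂⟩
    · exact Or.inr (Or.inr ⟨hyx, h₁⟩)
    · rcases lt_trichotomy x z with hxz | rfl | hzx
      · have := B_le_B hab hy.2 hz.1 le_rfl hxz.le hyx (hyx.trans hxz)
        exact absurd h₂ (by linarith)
      · exact rel_refl x
      · have := B_le_B hab hy.2 hx.1 hyz.le le_rfl hyx hzx
        exact Or.inr (Or.inr ⟨hzx, by linarith⟩)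
    · have := B_le_B hab hz.2 hx.1 le_rfl hyx.le hzy (hzy.trans hyx)
      exact Or.inr (Or.inr ⟨hzy.trans hyx, by linarith⟩)

end

theorem stmt_2_general (a b ρ : ℝ) :
    (∀ x ∈ Set.Icc a b, rel a b ρ x x) ∧
    (∀ x ∈ Set.Icc a b, ∀ y ∈ Set.Icc a b,
        rel a b ρ x y → rel a b ρ y x → x = y) ∧
    (∀ x ∈ Set.Icc a b, ∀ y ∈ Set.Icc a b, ∀ z ∈ Set.Icc a b,
        rel a b ρ x y → rel a b ρ y z → rel a b ρ x z) ∧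
    (∀ x ∈ Set.Icc a b, ∀ y ∈ Set.Icc a b, rel a b ρ x y ∨ rel a b ρ y x) :=
  ⟨fun x _ => rel_refl x, fun _ _ _ _ => rel_antisymm, fun _ hx _ hy _ hz => rel_trans hx hy hz,
    fun x _ y _ => rel_total x y⟩

theorem stmt_2 (a b ρ : ℝ) (hab : a < b) :
    (∀ x ∈ Set.Icc a b, rel a b ρ x x) ∧
    (∀ x ∈ Set.Icc a b, ∀ y ∈ Set.Icc a b,
        rel a b ρ x y → rel a b ρ y x → x = y) ∧
    (∀ x ∈ Set.Icc a b, ∀ y ∈ Set.Icc a b, ∀ z ∈ Set.Icc a b,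
        rel a b ρ x y → rel a b ρ y z → rel a b ρ x z) ∧
    (∀ x ∈ Set.Icc a b, ∀ y ∈ Set.Icc a b, rel a b ρ x y ∨ rel a b ρ y x) :=
  stmt_2_general a b ρ
end

section
/- Let T̃: t₁ → ⋯ → t_{2m} → t₁ be a cyclic sequence of 2m distinct reals in which every point is a turning point (i.e., alternately local maxima and minima along the cycle), with m ≥ 2. Then there exists an index i (cyclically) such that the path tᵢ → t_{i+1} → t_{i+2} → t_{i+3} is a detour, meaning tᵢ ≤ t_{i+2} < t_{i+1} ≤ t_{i+3} or tᵢ ≥ t_{i+2} > t_{i+1} ≥ t_{i+3} (indices mod 2m). -/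
/-!
Along the tour the points alternate between peaks and valleys, and since the tour is finite
there is a peak `j` of least height. The peaks `j - 2` and `j + 2` are then at least as high as
`j`, and comparing the valleys `j - 1` and `j + 1` decides which of the two paths
`j - 1 → j → j + 1 → j + 2` or `j - 2 → j - 1 → j → j + 1` is a detour.
-/

open Function

/-- `i` is a turning point of the cyclic tour `t` (a strict local extremum). -/
def turning (t : ℤ → ℝ) (i : ℤ) : Prop :=
  ¬(t (i - 1) < t i ∧ t i < t (i + 1)) ∧ ¬(t (i + 1) < t i ∧ t i < t (i - 1))

def IsPeak (t : ℤ → ℝ) (i : ℤ) : Prop :=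
  t (i - 1) < t i ∧ t (i + 1) < t i

def IsDetour (t : ℤ → ℝ) (i : ℤ) : Prop :=
  (t i ≤ t (i + 2) ∧ t (i + 2) < t (i + 1) ∧ t (i + 1) ≤ t (i + 3)) ∨
    (t (i + 3) ≤ t (i + 1) ∧ t (i + 1) < t (i + 2) ∧ t (i + 2) ≤ t i)

theorem Function.Periodic.map_emod {α : Type*} {f : ℤ → α} {n : ℤ} (h : Periodic f n)
    (i : ℤ) : f (i % n) = f i := by
  have := h.sub_int_mul_eq (x := i) (i / n)
  rwa [Int.cast_id, mul_comm, ← Int.emod_def] at this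

theorem Function.Periodic.finite_range {α : Type*} {f : ℤ → α} {n : ℤ} (h : Periodic f n)
    (hn : 0 < n) : (Set.range f).Finite :=
  h.image_Ioc hn 0 ▸ (Set.finite_Ioc 0 (0 + n)).image f

theorem exists_forall_le_of_finite_range {ι α : Type*} [LinearOrder α] {f : ι → α}
    (hf : (Set.range f).Finite) {s : Set ι} (hs : s.Nonempty) :
    ∃ j ∈ s, ∀ k ∈ s, f j ≤ f k := by
  obtain ⟨_, ⟨j, hj, rfl⟩, hmin⟩ :=
    Set.exists_min_image (f '' s) id (hf.subset (Set.image_subset_range f s)) (hs.image f)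
  exact ⟨j, hj, fun k hk => hmin (f k) ⟨k, hk, rfl⟩⟩

theorem apply_ne_apply_add_one_of_injOn {α : Type*} {t : ℤ → α} {n : ℤ} (hn : 1 < n)
    (hper : Periodic t n) (hinj : Set.InjOn t (Set.Ico 0 n)) (i : ℤ) : t i ≠ t (i + 1) := by
  intro h
  have hmod : i % n = (i + 1) % n :=
    hinj ⟨Int.emod_nonneg i (by omega), Int.emod_lt_of_pos i (by omega)⟩
      ⟨Int.emod_nonneg _ (by omega), Int.emod_lt_of_pos _ (by omega)⟩
      (by rw [hper.map_emod, hper.map_emod, h])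
  have : n ∣ 1 := by simpa using Int.ModEq.dvd hmod
  have := Int.le_of_dvd one_pos this
  omega

section Alternation

variable {t : ℤ → ℝ}

theorem IsPeak.add_two (hadj : ∀ i, t i ≠ t (i + 1)) (hturn : ∀ i, turning t i) {i : ℤ}
    (h : IsPeak t i) : IsPeak t (i + 2) := by
  have := hturn (i + 1); have := hturn (i + 2); have := hadj (i + 1); have := hadj (i + 2)
  unfold turning IsPeak at *
  grind

theorem IsPeak.sub_two (hadj : ∀ i, t i ≠ t (i + 1)) (hturn : ∀ i, turning t i) {i : ℤ}
    (h : IsPeak t i) : IsPeak t (i - 2) := by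
  have := hturn (i - 1); have := hturn (i - 2); have := hadj (i - 2); have := hadj (i - 3)
  unfold turning IsPeak at *
  grind

theorem exists_isPeak (hadj : ∀ i, t i ≠ t (i + 1)) (hturn : ∀ i, turning t i) :
    ∃ i, IsPeak t i := by
  rcases (hadj 0).lt_or_gt with h | h
  · have := hturn 1; have := hadj 1
    exact ⟨1, by unfold turning IsPeak at *; grind⟩
  · have := hturn 0; have := hadj (-1)
    exact ⟨0, by unfold turning IsPeak at *; grind⟩

end Alternation

theorem exists_isDetour_of_isPeak {t : ℤ → ℝ} {j : ℤ} (hj : IsPeak t j)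
    (hleft : t j ≤ t (j - 2)) (hright : t j ≤ t (j + 2)) : ∃ i, IsDetour t i := by
  rcases le_or_gt (t (j - 1)) (t (j + 1)) with h | h
  · refine ⟨j - 1, .inl ?_⟩
    rw [show j - 1 + 2 = j + 1 by ring, show j - 1 + 1 = j by ring, show j - 1 + 3 = j + 2 by ring]
    exact ⟨h, hj.2, hright⟩
  · refine ⟨j - 2, .inr ?_⟩
    rw [show j - 2 + 3 = j + 1 by ring, show j - 2 + 1 = j - 1 by ring, show j - 2 + 2 = j by ring]
    exact ⟨h.le, hj.1, hleft⟩

/-- Any contracted tour (a cyclic sequence of `2m` distinct reals, `m ≥ 2`, all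
of whose points are turning points) contains a detour
`tᵢ → t_{i+1} → t_{i+2} → t_{i+3}`. -/
theorem stmt_6 (m : ℕ) (hm : 2 ≤ m) (t : ℤ → ℝ)
    (hper : ∀ i, t (i + 2 * (m : ℤ)) = t i)
    (hinj : ∀ i j, 0 ≤ i → i < 2 * (m : ℤ) → 0 ≤ j → j < 2 * (m : ℤ) →
      t i = t j → i = j)
    (hturn : ∀ i, turning t i) :
    ∃ i : ℤ,
      (t i ≤ t (i + 2) ∧ t (i + 2) < t (i + 1) ∧ t (i + 1) ≤ t (i + 3)) ∨
      (t (i + 3) ≤ t (i + 1) ∧ t (i + 1) < t (i + 2) ∧ t (i + 2) ≤ t i) := by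
  have hper : Periodic t (2 * m) := hper
  have hadj : ∀ i, t i ≠ t (i + 1) := apply_ne_apply_add_one_of_injOn (by omega) hper
    fun i hi j hj => hinj i j hi.1 hi.2 hj.1 hj.2
  obtain ⟨j, hj : IsPeak t j, hmin⟩ :=
    exists_forall_le_of_finite_range (hper.finite_range (by omega)) (exists_isPeak hadj hturn)
  exact exists_isDetour_of_isPeak hj (hmin _ (hj.sub_two hadj hturn))
    (hmin _ (hj.add_two hadj hturn))
end

section
/- Let T̃: t₁ → ⋯ → t_{2m} → t₁ be a contracted tour on 2m distinct turning points. Then |cf(T̃)| ≥ m, where cf(T̃) is the set of conflicting pairs (tᵢ, tⱼ) with tᵢ ≤ t_{j+1} < t_{i+1} ≤ tⱼ (indices cyclic). -/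
/-- The pair `(i, j)` is conflicting in the cyclic tour `t`:
`tᵢ ≤ t_{j+1} < t_{i+1} ≤ tⱼ`. -/
def conflicting (t : ℤ → ℝ) (i j : ℤ) : Prop :=
  t i ≤ t (j + 1) ∧ t (j + 1) < t (i + 1) ∧ t (i + 1) ≤ t j

/-!
Let `p` be the lowest peak of the tour. If its left valley is lower than its right one, then
`t (p - 1) < t (p + 1) < t p < t (p + 2)`, and deleting the points `p` and `p + 1` merges the
edges `p - 1`, `p`, `p + 1` into one ascent `t (p - 1) → t (p + 2)` while keeping every point a
turning point. A conflicting pair that uses the merged ascent lifts to one using the ascent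
`p - 1` or `p + 1`, so the conflicting pairs of the shorter tour inject into those of the
original one, missing the pair `(p - 1, p)`; induction on `m` concludes. If the left valley is the
higher one, the same configuration appears at `p - 1` in `-t`, and negation only swaps the two
edges of a conflicting pair.
-/

open Finset

theorem Int.ModEq.eq_of_nonneg_of_lt {n a b : ℤ} (h : a ≡ b [ZMOD n]) (ha₀ : 0 ≤ a)
    (ha : a < n) (hb₀ : 0 ≤ b) (hb : b < n) : a = b := by
  rwa [Int.ModEq, Int.emod_eq_of_lt ha₀ ha, Int.emod_eq_of_lt hb₀ hb] at h

namespace Function.Periodic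
variable {α : Type*} {t : ℤ → α} {n : ℤ}

theorem apply_emod (h : Periodic t n) (a : ℤ) : t (a % n) = t a := by
  rw [Int.emod_def, mul_comm]
  exact h.sub_int_mul_eq _

theorem apply_eq_of_modEq (h : Periodic t n) {a b : ℤ} (hab : a ≡ b [ZMOD n]) : t a = t b := by
  rw [← h.apply_emod a, ← h.apply_emod b, hab.eq]

end Function.Periodic

section turning
variable {t : ℤ → ℝ} {i : ℤ}

theorem turning_of_lt_of_lt (h₁ : t (i - 1) < t i) (h₂ : t (i + 1) < t i) : turning t i :=
  ⟨fun h => lt_asymm h.2 h₂, fun h => lt_asymm h.2 h₁⟩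

theorem turning_of_gt_of_gt (h₁ : t i < t (i - 1)) (h₂ : t i < t (i + 1)) : turning t i :=
  ⟨fun h => lt_asymm h.1 h₁, fun h => lt_asymm h.1 h₂⟩

theorem turning_neg : turning (fun k => -t k) i ↔ turning t i := by
  simp only [turning, neg_lt_neg_iff]
  tauto

theorem turning_comp_add (s : ℤ) : turning (fun k => t (k + s)) i ↔ turning t (i + s) := by
  simp only [turning, sub_add_eq_add_sub, add_right_comm i 1 s]

theorem Function.Periodic.turning_emod {n : ℤ} (h : Function.Periodic t n) :
    turning t (i % n) ↔ turning t i := by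
  have hi := Int.mod_modEq i n
  simp only [turning, h.apply_eq_of_modEq (hi.sub_right 1), h.apply_eq_of_modEq hi,
    h.apply_eq_of_modEq (hi.add_right 1)]

end turning

section conflicting
variable {t : ℤ → ℝ} {i j : ℤ}

theorem conflicting.lt_right (h : conflicting t i j) : t (j + 1) < t j :=
  h.2.1.trans_le h.2.2

theorem conflicting_neg : conflicting (fun k => -t k) i j ↔ conflicting t j i := by
  simp only [conflicting, neg_le_neg_iff, neg_lt_neg_iff]
  tauto

end conflicting

open Classical in
noncomputable def conflictPairs (t : ℤ → ℝ) (n : ℤ) : Finset (ℤ × ℤ) :=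
  (Ico 0 n ×ˢ Ico 0 n).filter fun p => conflicting t p.1 p.2

theorem mem_conflictPairs {t : ℤ → ℝ} {n : ℤ} {p : ℤ × ℤ} :
    p ∈ conflictPairs t n ↔
      (0 ≤ p.1 ∧ p.1 < n) ∧ (0 ≤ p.2 ∧ p.2 < n) ∧ conflicting t p.1 p.2 := by
  simp [conflictPairs, and_assoc]

theorem card_conflictPairs_neg (t : ℤ → ℝ) (n : ℤ) :
    #(conflictPairs (fun k => -t k) n) = #(conflictPairs t n) := by
  refine card_nbij' Prod.swap Prod.swap ?_ ?_ (fun _ _ => rfl) (fun _ _ => rfl) <;>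
  · rintro ⟨i, j⟩ h
    simp only [mem_coe, mem_conflictPairs, conflicting_neg] at h ⊢
    tauto

theorem card_conflictPairs_comp_add_le {t : ℤ → ℝ} {n : ℤ} (hper : Function.Periodic t n)
    (hn : 0 < n) (s : ℤ) :
    #(conflictPairs (fun i => t (i + s)) n) ≤ #(conflictPairs t n) := by
  have hmod : ∀ a, 0 ≤ a % n ∧ a % n < n := fun a =>
    ⟨Int.emod_nonneg a hn.ne', Int.emod_lt_of_pos a hn⟩
  refine card_le_card_of_injOn (fun p => ((p.1 + s) % n, (p.2 + s) % n)) ?_ ?_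
  · rintro ⟨i, j⟩ h
    simp only [mem_coe, mem_conflictPairs, conflicting] at h ⊢
    have hadd : ∀ a, t ((a + s) % n + 1) = t (a + 1 + s) := fun a => by
      rw [add_right_comm, hper.apply_eq_of_modEq ((Int.mod_modEq _ n).add_right 1)]
    simp only [hadd, hper.apply_emod]
    exact ⟨hmod _, hmod _, h.2.2⟩
  · rintro ⟨i, j⟩ h ⟨i', j'⟩ h' heq
    simp only [mem_coe, mem_conflictPairs, Prod.mk.injEq] at h h' heq
    ext
    · exact (Int.ModEq.add_right_cancel' s heq.1).eq_of_nonneg_of_lt h.1.1 h.1.2 h'.1.1 h'.1.2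
    · exact (Int.ModEq.add_right_cancel' s heq.2).eq_of_nonneg_of_lt
        h.2.1.1 h.2.1.2 h'.2.1.1 h'.2.1.2

def ContractibleAt (t : ℤ → ℝ) (p : ℤ) : Prop :=
  t (p - 1) < t (p + 1) ∧ t (p + 1) < t p ∧ t p < t (p + 2)

/-- A pair of the contraction `fun i => t (i % w)` (the tour `t` of period `w + 2` with the points
`w` and `w + 1` deleted) that uses its merged ascent `w - 1` lifts to the ascent `w - 1 → w` or
`w + 1 → w + 2` of `t`, according to whether its descent ends below `t w`. -/
noncomputable def contractLift (t : ℤ → ℝ) (w : ℤ) (p : ℤ × ℤ) : ℤ × ℤ :=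
  if p.1 = w - 1 ∧ t w ≤ t (p.2 + 1) then (w + 1, p.2) else p

section contract
variable {t : ℤ → ℝ} {w : ℤ}

theorem contractLift_mem (hQ : t (w + 2) = t 0) (hp : ContractibleAt t w) {p : ℤ × ℤ}
    (hpw : p ∈ conflictPairs (fun i => t (i % w)) w) :
    contractLift t w p ∈ (conflictPairs t (w + 2)).erase (w - 1, w) := by
  obtain ⟨hAB, hBP, hPQ⟩ := hp
  obtain ⟨i, j⟩ := p
  obtain ⟨⟨hi₀, hi⟩, ⟨hj₀, hj⟩, hc⟩ := mem_conflictPairs.1 hpw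
  have ht : ∀ a, 0 ≤ a → a < w → t (a % w) = t a := fun a h₀ h₁ => by
    rw [Int.emod_eq_of_lt h₀ h₁]
  have hwrap : t ((w - 1 + 1) % w) = t (w + 2) := by rw [sub_add_cancel, Int.emod_self, hQ]
  have hj' : j ≠ w - 1 := by
    rintro rfl
    have := hc.lt_right
    rw [hwrap, ht _ (by omega) hj] at this
    exact lt_asymm this (hAB.trans (hBP.trans hPQ))
  simp only [conflicting, ht j hj₀ hj, ht (j + 1) (by omega) (by omega)] at hc
  have hmem : ∀ i', 0 ≤ i' → i' < w + 2 → conflicting t i' j →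
      (i', j) ∈ (conflictPairs t (w + 2)).erase (w - 1, w) := fun i' h₀ h₁ hc' => by
    simp only [mem_erase, mem_conflictPairs, ne_eq, Prod.mk.injEq]
    exact ⟨by omega, ⟨h₀, h₁⟩, ⟨hj₀, by omega⟩, hc'⟩
  unfold contractLift
  by_cases hi' : i = w - 1
  · subst hi'
    rw [ht _ hi₀ hi, hwrap] at hc
    by_cases hjw : t w ≤ t (j + 1)
    · rw [if_pos ⟨rfl, hjw⟩]
      refine hmem _ (by omega) (by omega) ⟨hBP.le.trans hjw, ?_⟩
      rw [show w + 1 + 1 = w + 2 by ring]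
      exact hc.2
    · rw [if_neg (fun h => hjw h.2)]
      refine hmem _ hi₀ (by omega) ⟨hc.1, ?_⟩
      rw [sub_add_cancel]
      exact ⟨not_le.1 hjw, hPQ.le.trans hc.2.2⟩
  · rw [if_neg (fun h => hi' h.1)]
    rw [ht i hi₀ hi, ht (i + 1) (by omega) (by omega)] at hc
    exact hmem i hi₀ (by omega) hc

theorem card_conflictPairs_contract_add_one_le (hw : 0 < w) (hQ : t (w + 2) = t 0)
    (hp : ContractibleAt t w) :
    #(conflictPairs (fun i => t (i % w)) w) + 1 ≤ #(conflictPairs t (w + 2)) := by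
  have hlost : (w - 1, w) ∈ conflictPairs t (w + 2) := by
    simp only [mem_conflictPairs, conflicting, sub_add_cancel]
    exact ⟨⟨by omega, by omega⟩, ⟨by omega, by omega⟩, hp.1.le, hp.2.1, le_rfl⟩
  rw [← card_erase_add_one hlost, add_le_add_iff_right]
  refine card_le_card_of_injOn (contractLift t w) (fun _ hp' => contractLift_mem hQ hp hp') ?_
  rintro ⟨i, j⟩ hij ⟨i', j'⟩ hij' heq
  simp only [mem_coe, mem_conflictPairs] at hij hij'
  unfold contractLift at heq
  split_ifs at heq <;> simp only [Prod.mk.injEq] at heq ⊢ <;> omega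

end contract

structure IsTour (t : ℤ → ℝ) (n : ℤ) : Prop where
  two_le : 2 ≤ n
  apply_eq_iff : ∀ a b, t a = t b ↔ a ≡ b [ZMOD n]
  turns : ∀ i, turning t i

namespace IsTour
variable {t : ℤ → ℝ} {n w : ℤ}

theorem periodic (h : IsTour t n) : Function.Periodic t n := fun _ =>
  (h.apply_eq_iff _ _).2 Int.add_modEq_right

theorem apply_ne (h : IsTour t n) {a b : ℤ} (hab : a < b) (hba : b < a + n) : t a ≠ t b := by
  rw [Ne, h.apply_eq_iff, Int.modEq_iff_dvd]
  intro hdvd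
  have := Int.eq_zero_of_dvd_of_nonneg_of_lt (by omega) (by omega) hdvd
  omega

theorem lt_or_gt (h : IsTour t n) (i : ℤ) : t i < t (i + 1) ∨ t (i + 1) < t i :=
  (h.apply_ne (lt_add_one i) (by linarith [h.two_le])).lt_or_gt

theorem apply_lt_apply_add_one_iff (h : IsTour t n) (i : ℤ) :
    t i < t (i + 1) ↔ t (i + 2) < t (i + 1) := by
  have hturn := h.turns (i + 1)
  have hnext := h.lt_or_gt (i + 1)
  rw [turning, add_sub_cancel_right, add_assoc, one_add_one_eq_two] at hturn
  rw [add_assoc, one_add_one_eq_two] at hnext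
  exact ⟨fun hup => hnext.resolve_left fun hc => hturn.1 ⟨hup, hc⟩,
    fun hdown => (h.lt_or_gt i).resolve_right fun hc => hturn.2 ⟨hdown, hc⟩⟩

theorem apply_add_one_lt_apply_iff (h : IsTour t n) (i : ℤ) :
    t (i + 1) < t i ↔ t (i + 1) < t (i + 2) := by
  have hnext := h.lt_or_gt (i + 1)
  rw [add_assoc, one_add_one_eq_two] at hnext
  have halt := h.apply_lt_apply_add_one_iff i
  exact ⟨fun hdown => hnext.resolve_right fun hc => lt_asymm hdown (halt.2 hc),
    fun hup => (h.lt_or_gt i).resolve_left fun hc => lt_asymm (halt.1 hc) hup⟩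

theorem neg (h : IsTour t n) : IsTour (fun i => -t i) n where
  two_le := h.two_le
  apply_eq_iff a b := by rw [neg_inj, h.apply_eq_iff]
  turns i := turning_neg.2 (h.turns i)

theorem comp_add (h : IsTour t n) (s : ℤ) : IsTour (fun i => t (i + s)) n where
  two_le := h.two_le
  apply_eq_iff a b := by
    rw [h.apply_eq_iff]
    exact ⟨Int.ModEq.add_right_cancel' s, (Int.ModEq.add_right s ·)⟩
  turns i := (turning_comp_add s).2 (h.turns (i + s))

theorem exists_lowest_peak (h : IsTour t n) :
    ∃ p, t (p + 1) < t p ∧ ∀ q, t (q + 1) < t q → t p ≤ t q := by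
  classical
  have hn := h.two_le
  have hpeaks : ((Ico 0 n).filter fun i => t (i + 1) < t i).Nonempty := by
    rcases h.lt_or_gt 0 with hup | hdown
    · refine ⟨1, mem_filter.2 ⟨mem_Ico.2 ⟨by omega, by omega⟩, ?_⟩⟩
      simpa using (h.apply_lt_apply_add_one_iff 0).1 hup
    · exact ⟨0, mem_filter.2 ⟨mem_Ico.2 ⟨le_rfl, by omega⟩, hdown⟩⟩
  obtain ⟨p, hp, hmin⟩ := exists_min_image _ t hpeaks
  refine ⟨p, (mem_filter.1 hp).2, fun q hq => ?_⟩
  have hq₁ : t (q % n + 1) = t (q + 1) :=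
    h.periodic.apply_eq_of_modEq ((Int.mod_modEq q n).add_right 1)
  rw [← h.periodic.apply_emod q]
  refine hmin _ (mem_filter.2 ⟨mem_Ico.2 ⟨Int.emod_nonneg q (by omega),
    Int.emod_lt_of_pos q (by omega)⟩, ?_⟩)
  rwa [hq₁, h.periodic.apply_emod]

theorem exists_contractibleAt (h : IsTour t n) (hn : 4 ≤ n) :
    ∃ p, ContractibleAt t p ∨ ContractibleAt (fun i => -t i) p := by
  obtain ⟨p, hpeak, hlowest⟩ := h.exists_lowest_peak
  have hleft : t (p - 1) < t p := by
    have := (h.apply_lt_apply_add_one_iff (p - 1)).2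
    rw [sub_add_cancel, show p - 1 + 2 = p + 1 by ring] at this
    exact this hpeak
  have hnext : t (p + 2 + 1) < t (p + 2) := by
    have := h.apply_lt_apply_add_one_iff (p + 1)
    simp only [add_assoc, Int.reduceAdd] at this ⊢
    exact this.1 ((h.apply_add_one_lt_apply_iff p).1 hpeak)
  have hprev : t (p - 2 + 1) < t (p - 2) :=
    (h.apply_add_one_lt_apply_iff (p - 2)).2
      (by rwa [show p - 2 + 1 = p - 1 by ring, show p - 2 + 2 = p by ring])
  rcases (h.apply_ne (a := p - 1) (b := p + 1) (by omega) (by omega)).lt_or_gt with hlt | hgt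
  · exact ⟨p, .inl ⟨hlt, hpeak,
      (hlowest _ hnext).lt_of_ne (h.apply_ne (by omega) (by omega))⟩⟩
  · refine ⟨p - 1, .inr ?_⟩
    simp only [ContractibleAt, neg_lt_neg_iff]
    rw [sub_add_cancel, show p - 1 - 1 = p - 2 by ring, show p - 1 + 2 = p + 1 by ring]
    exact ⟨(hlowest _ hprev).lt_of_ne (h.apply_ne (by omega) (by omega)).symm, hleft, hgt⟩

theorem turning_contract (h : IsTour t (w + 2)) (hw : 2 ≤ w) (hp : ContractibleAt t w) {r : ℤ}
    (hr₀ : 0 ≤ r) (hr : r < w) : turning (fun i => t (i % w)) r := by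
  obtain ⟨hAB, hBP, hPQ⟩ := hp
  have ht : ∀ a, 0 ≤ a → a < w → t (a % w) = t a := fun a h₀ h₁ => by
    rw [Int.emod_eq_of_lt h₀ h₁]
  have hQ : t (w + 2) = t 0 := by simpa using h.periodic 0
  have hlow : t (w - 1) < t 0 := hAB.trans (hBP.trans (hPQ.trans_eq hQ))
  rcases (show r = 0 ∨ r = w - 1 ∨ (0 < r ∧ r < w - 1) by omega)
    with rfl | rfl | ⟨hr₀', hr'⟩
  · have hm1 : (0 - 1) % w = w - 1 := by
      rw [show (0 : ℤ) - 1 = w - 1 + w * (-1) by ring, Int.add_mul_emod_self_left,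
        Int.emod_eq_of_lt (by omega) (by omega)]
    have hpeak : t 1 < t 0 := by
      have := h.apply_lt_apply_add_one_iff (w + 1)
      simp only [add_assoc, Int.reduceAdd] at this
      rw [hQ, show w + 3 = 1 + (w + 2) by ring, h.periodic 1] at this
      exact this.1 (hBP.trans (hPQ.trans_eq hQ))
    refine turning_of_lt_of_lt ?_ ?_ <;>
      simp only [hm1, Int.zero_emod, zero_add, ht 1 (by omega) (by omega)]
    · exact hlow
    · exact hpeak
  · have hvalley : t (w - 1) < t (w - 2) := by
      have := h.apply_add_one_lt_apply_iff (w - 2)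
      rw [show w - 2 + 1 = w - 1 by ring, show w - 2 + 2 = w by ring] at this
      exact this.2 (hAB.trans hBP)
    refine turning_of_gt_of_gt ?_ ?_ <;>
      simp only [sub_add_cancel, Int.emod_self, ht (w - 1) (by omega) (by omega),
        show w - 1 - 1 = w - 2 by ring, ht (w - 2) (by omega) (by omega)]
    · exact hvalley
    · exact hlow
  · simp only [turning]
    rw [ht r hr₀ hr, ht (r - 1) (by omega) (by omega), ht (r + 1) (by omega) (by omega)]
    exact h.turns r

theorem contract (h : IsTour t (w + 2)) (hw : 2 ≤ w) (hp : ContractibleAt t w) :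
    IsTour (fun i => t (i % w)) w where
  two_le := hw
  apply_eq_iff a b := by
    have hmod : ∀ c, 0 ≤ c % w ∧ c % w < w + 2 := fun c =>
      ⟨Int.emod_nonneg c (by omega), (Int.emod_lt_of_pos c (by omega)).trans (by omega)⟩
    rw [h.apply_eq_iff]
    exact ⟨fun hab => hab.eq_of_nonneg_of_lt (hmod a).1 (hmod a).2 (hmod b).1 (hmod b).2,
      fun hab => by rw [hab.eq]⟩
  turns i := by
    have hper : Function.Periodic (fun i => t (i % w)) w := fun i => by simp
    rw [← hper.turning_emod]
    exact h.turning_contract hw hp (Int.emod_nonneg i (by omega)) (Int.emod_lt_of_pos i (by omega))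

theorem exists_contraction_of_contractibleAt (h : IsTour t (w + 2)) (hw : 2 ≤ w) {p : ℤ}
    (hp : ContractibleAt t p) :
    ∃ t', IsTour t' w ∧ #(conflictPairs t' w) + 1 ≤ #(conflictPairs t (w + 2)) := by
  set u : ℤ → ℝ := fun i => t (i + (p - w))
  have hu : IsTour u (w + 2) := h.comp_add _
  have hup : ContractibleAt u w := by
    simp only [ContractibleAt, u]
    rwa [show w - 1 + (p - w) = p - 1 by ring, show w + 1 + (p - w) = p + 1 by ring,
      show w + (p - w) = p by ring, show w + 2 + (p - w) = p + 2 by ring]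
  refine ⟨_, hu.contract hw hup, ?_⟩
  calc #(conflictPairs (fun i => u (i % w)) w) + 1 ≤ #(conflictPairs u (w + 2)) :=
        card_conflictPairs_contract_add_one_le (by omega) (by simpa using hu.periodic 0) hup
    _ ≤ #(conflictPairs t (w + 2)) := card_conflictPairs_comp_add_le h.periodic (by omega) _

theorem exists_contraction (h : IsTour t (w + 2)) (hw : 2 ≤ w) :
    ∃ t', IsTour t' w ∧ #(conflictPairs t' w) + 1 ≤ #(conflictPairs t (w + 2)) := by
  obtain ⟨p, hp | hp⟩ := h.exists_contractibleAt (by omega)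
  · exact h.exists_contraction_of_contractibleAt hw hp
  · rw [← card_conflictPairs_neg]
    exact h.neg.exists_contraction_of_contractibleAt hw hp

theorem le_card_conflictPairs {m : ℕ} (hm : 1 ≤ m) (h : IsTour t (2 * m)) :
    m ≤ #(conflictPairs t (2 * m)) := by
  induction m, hm using Nat.le_induction generalizing t with
  | base =>
    rw [Nat.cast_one, mul_one] at h ⊢
    have h2 : t 2 = t 0 := (h.apply_eq_iff 2 0).2 rfl
    rw [Nat.one_le_iff_ne_zero, Ne, card_eq_zero, ← Ne, ← nonempty_iff_ne_empty]
    have h01 := h.lt_or_gt 0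
    rw [zero_add] at h01
    rcases h01 with hup | hdown
    · exact ⟨(0, 1), mem_conflictPairs.2 ⟨by norm_num, by norm_num, by
        norm_num [conflicting, h2, hup]⟩⟩
    · exact ⟨(1, 0), mem_conflictPairs.2 ⟨by norm_num, by norm_num, by
        norm_num [conflicting, h2, hdown]⟩⟩
  | succ m hm ih =>
    have h' : IsTour t (2 * m + 2) := by rwa [Nat.cast_succ, mul_add_one] at h
    obtain ⟨t', ht', hcard⟩ := h'.exists_contraction (by omega)
    have := ih ht'
    rw [Nat.cast_succ, mul_add_one]
    omega

end IsTour

/-- A contracted tour on `2m` distinct turning points has at least `m`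
conflicting pairs. -/
theorem stmt_8 (m : ℕ) (hm : 1 ≤ m) (t : ℤ → ℝ)
    (hper : ∀ i, t (i + 2 * (m : ℤ)) = t i)
    (hinj : ∀ i j, 0 ≤ i → i < 2 * (m : ℤ) → 0 ≤ j → j < 2 * (m : ℤ) →
      t i = t j → i = j)
    (hturn : ∀ i, turning t i) :
    m ≤ Nat.card {p : ℤ × ℤ // 0 ≤ p.1 ∧ p.1 < 2 * (m : ℤ) ∧
          0 ≤ p.2 ∧ p.2 < 2 * (m : ℤ) ∧ conflicting t p.1 p.2} := by
  have hperiodic : Function.Periodic t (2 * m) := hper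
  have hmod : ∀ a, 0 ≤ a % (2 * m : ℤ) ∧ a % (2 * m : ℤ) < 2 * m := fun a =>
    ⟨Int.emod_nonneg a (by omega), Int.emod_lt_of_pos a (by omega)⟩
  have htour : IsTour t (2 * m) := by
    refine ⟨by omega, fun a b => ⟨fun hab => ?_, hperiodic.apply_eq_of_modEq⟩, hturn⟩
    refine hinj _ _ (hmod a).1 (hmod a).2 (hmod b).1 (hmod b).2 ?_
    rwa [hperiodic.apply_emod, hperiodic.apply_emod]
  calc m ≤ #(conflictPairs t (2 * m)) := htour.le_card_conflictPairs hm
    _ = _ := by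
      rw [← Nat.card_eq_finsetCard]
      exact Nat.card_congr (Equiv.subtypeEquivRight fun p => by rw [mem_conflictPairs]; tauto)
end

section
/- Let ALG be a separable online algorithm for the online facility assignment problem OFA(k,ℓ). If ALG is c-competitive for OFA(k,1) (servers of capacity 1), then ALG is c-competitive for OFA(k,ℓ) for every ℓ ≥ 1. -/
/-- Total matching cost of the assignment `f` for requests `σ` with servers `S`. -/
noncomputable def matchCost {X : Type*} [MetricSpace X] {k n : ℕ}
    (S : Fin k → X) (σ : Fin n → X) (f : Fin n → Fin k) : ℝ :=
  ∑ i, dist (σ i) (S (f i))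

/-- The assignment `f` respects the capacity `cap` of every server. -/
def validCap {k n : ℕ} (cap : ℕ) (f : Fin n → Fin k) : Prop :=
  ∀ t : Fin k, (Finset.univ.filter (fun i => f i = t)).card ≤ cap

/-!
Separability cuts a capacity-`ℓ` instance into `ℓ` capacity-1 instances on which ALG behaves as
on the whole sequence, and on which OPT's choices form a valid capacity-1 assignment. Summing
`c`-competitiveness of ALG against those assignments over the blocks bounds ALG's total cost by
`c` times OPT's total cost, hence by `c` times the cost of any capacity-`ℓ` assignment.
-/

theorem matchCost_eq_sum_blocks {X : Type*} [MetricSpace X] {k m n ℓ : ℕ} (S : Fin k → X)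
    (σ : Fin n → X) (f : Fin n → Fin k) {e : Fin ℓ × Fin m → Fin n}
    (he : Function.Bijective e) :
    matchCost S σ f =
      ∑ p, matchCost S (fun j => σ (e (p, j))) (fun j => f (e (p, j))) := by
  unfold matchCost
  rw [← Fintype.sum_bijective e he _ _ fun _ => rfl, Fintype.sum_prod_type]

theorem validCap_one_of_injective {k n : ℕ} {f : Fin n → Fin k} (hf : Function.Injective f) :
    validCap 1 f := fun _ =>
  Finset.card_le_one.mpr fun _ ha _ hb =>
    hf ((Finset.mem_filter.mp ha).2.trans (Finset.mem_filter.mp hb).2.symm)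

theorem stmt_14_general {X : Type*} [MetricSpace X] (k ℓ : ℕ)
    (S : Fin k → X)
    (A O : (n : ℕ) → (Fin n → X) → (Fin n → Fin k))
    (c : ℝ) (hc : 1 ≤ c)
    -- `O` is an optimal offline algorithm (for capacity 1 and for capacity ℓ)
    (hOoptL : ∀ (σ : Fin (k * ℓ) → X) (g : Fin (k * ℓ) → Fin k), validCap ℓ g →
        matchCost S σ (O (k * ℓ) σ) ≤ matchCost S σ g)
    -- `A` is separable: coprime partition with per-request agreement
    (hsep : ∀ σ : Fin (k * ℓ) → X, ∃ e : Fin ℓ × Fin k → Fin (k * ℓ),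
        Function.Bijective e ∧
        (∀ p : Fin ℓ, StrictMono (fun j : Fin k => e (p, j))) ∧
        (∀ (p : Fin ℓ) (j j' : Fin k), j ≠ j' →
            A (k * ℓ) σ (e (p, j)) ≠ A (k * ℓ) σ (e (p, j')) ∧
            O (k * ℓ) σ (e (p, j)) ≠ O (k * ℓ) σ (e (p, j'))) ∧
        (∀ (p : Fin ℓ) (j : Fin k),
            A (k * ℓ) σ (e (p, j)) = A k (fun j' => σ (e (p, j'))) j ∧
            O (k * ℓ) σ (e (p, j)) = O k (fun j' => σ (e (p, j'))) j))
    -- `A` is `c`-competitive for OFA(k,1)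
    (hcomp1 : ∀ (σ : Fin k → X) (g : Fin k → Fin k), validCap 1 g →
        matchCost S σ (A k σ) ≤ c * matchCost S σ g) :
    -- then `A` is `c`-competitive for OFA(k,ℓ)
    ∀ (σ : Fin (k * ℓ) → X) (g : Fin (k * ℓ) → Fin k), validCap ℓ g →
      matchCost S σ (A (k * ℓ) σ) ≤ c * matchCost S σ g := by
  intro σ g hg
  obtain ⟨e, he, -, hcoprime, hagree⟩ := hsep σ
  have hOblock : ∀ p, validCap 1 fun j => O (k * ℓ) σ (e (p, j)) := fun p =>
    validCap_one_of_injective fun j j' h => by_contra fun hjj' => (hcoprime p j j' hjj').2 h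
  have hAblock : ∀ p, (fun j => A (k * ℓ) σ (e (p, j))) = A k fun j => σ (e (p, j)) := fun p =>
    funext fun j => (hagree p j).1
  calc matchCost S σ (A (k * ℓ) σ)
      = ∑ p, matchCost S (fun j => σ (e (p, j))) (A k fun j => σ (e (p, j))) := by
        simp only [matchCost_eq_sum_blocks S σ _ he, hAblock]
    _ ≤ ∑ p, c * matchCost S (fun j => σ (e (p, j))) (fun j => O (k * ℓ) σ (e (p, j))) :=
        Finset.sum_le_sum fun p _ => hcomp1 _ _ (hOblock p)
    _ = c * matchCost S σ (O (k * ℓ) σ) := by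
        rw [← Finset.mul_sum, ← matchCost_eq_sum_blocks S σ _ he]
    _ ≤ c * matchCost S σ g :=
        mul_le_mul_of_nonneg_left (hOoptL σ g hg) (zero_le_one.trans hc)

/-- If an online algorithm `A` for OFA(k,ℓ) is separable (every request
sequence `σ` of length `kℓ` admits a coprime partition into `ℓ` subsequences
of length `k` on which the per-request servers of `A` resp. of the optimal
offline algorithm `O` agree with the capacity-1 runs on the subsequences
alone), and `A` is `c`-competitive for OFA(k,1), then `A` is `c`-competitive
for OFA(k,ℓ). -/
theorem stmt_14 {X : Type*} [MetricSpace X] (k ℓ : ℕ) (hk : 1 ≤ k) (hℓ : 1 ≤ ℓ)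
    (S : Fin k → X)
    (A O : (n : ℕ) → (Fin n → X) → (Fin n → Fin k))
    (c : ℝ) (hc : 1 ≤ c)
    -- `A` and `O` respect the capacities
    (hAvalid1 : ∀ σ : Fin k → X, validCap 1 (A k σ))
    (hAvalidL : ∀ σ : Fin (k * ℓ) → X, validCap ℓ (A (k * ℓ) σ))
    (hOvalid1 : ∀ σ : Fin k → X, validCap 1 (O k σ))
    (hOvalidL : ∀ σ : Fin (k * ℓ) → X, validCap ℓ (O (k * ℓ) σ))
    -- `O` is an optimal offline algorithm (for capacity 1 and for capacity ℓ)
    (hOopt1 : ∀ (σ : Fin k → X) (g : Fin k → Fin k), validCap 1 g →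
        matchCost S σ (O k σ) ≤ matchCost S σ g)
    (hOoptL : ∀ (σ : Fin (k * ℓ) → X) (g : Fin (k * ℓ) → Fin k), validCap ℓ g →
        matchCost S σ (O (k * ℓ) σ) ≤ matchCost S σ g)
    -- `A` is separable: coprime partition with per-request agreement
    (hsep : ∀ σ : Fin (k * ℓ) → X, ∃ e : Fin ℓ × Fin k → Fin (k * ℓ),
        Function.Bijective e ∧
        (∀ p : Fin ℓ, StrictMono (fun j : Fin k => e (p, j))) ∧
        (∀ (p : Fin ℓ) (j j' : Fin k), j ≠ j' →
            A (k * ℓ) σ (e (p, j)) ≠ A (k * ℓ) σ (e (p, j')) ∧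
            O (k * ℓ) σ (e (p, j)) ≠ O (k * ℓ) σ (e (p, j'))) ∧
        (∀ (p : Fin ℓ) (j : Fin k),
            A (k * ℓ) σ (e (p, j)) = A k (fun j' => σ (e (p, j'))) j ∧
            O (k * ℓ) σ (e (p, j)) = O k (fun j' => σ (e (p, j'))) j))
    -- `A` is `c`-competitive for OFA(k,1)
    (hcomp1 : ∀ (σ : Fin k → X) (g : Fin k → Fin k), validCap 1 g →
        matchCost S σ (A k σ) ≤ c * matchCost S σ g) :
    -- then `A` is `c`-competitive for OFA(k,ℓ)
    ∀ (σ : Fin (k * ℓ) → X) (g : Fin (k * ℓ) → Fin k), validCap ℓ g →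
      matchCost S σ (A (k * ℓ) σ) ≤ c * matchCost S σ g :=
  stmt_14_general k ℓ S A O c hc hOoptL hsep hcomp1
end

section
/- For the online facility assignment problem on a line with k ≥ 2 equidistant servers (OFAL_eq(k,ℓ)), the competitive ratio of the greedy algorithm GRDY is at least 4k − 5. Concretely, with servers at positions 0, 1, …, k−1 each of capacity 1, the request sequence r₁ = 1/2, r₂ = 1, r₃ = 2, …, r_k = k−1 forces GRDY to incur cost (4k−5)/2 while OPT incurs cost 1/2. -/
/-! GRDY sends `1/2` to server `1` (the tie with server `0` is broken upwards); from then on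
each request `j` finds server `j` taken and moves one step right to `j + 1`, until the last
request `k - 1` finds only server `0` free. This costs `1/2 + (k - 2) + (k - 1)`. The identity
assignment costs `1/2`, and no assignment costs less, since `1/2` is at distance at least `1/2`
from every server. -/

/-- The nearest free server to the request `r` (ties broken in favour of the
server with the largest index): the maximum-index element among the free
servers minimizing the distance to `r`. -/
noncomputable def nearestFree (k : ℕ) (pos : Fin k → ℝ)
    (free : Finset (Fin k)) (r : ℝ) : Option (Fin k) :=
  (free.filter (fun t => ∀ t' ∈ free, |r - pos t| ≤ |r - pos t'|)).max

/-- The list of servers chosen by the greedy algorithm GRDY on the request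
list `rs`, starting with the set `free` of free (capacity-1) servers. -/
noncomputable def greedyRun (k : ℕ) (pos : Fin k → ℝ) :
    List ℝ → Finset (Fin k) → List (Fin k)
  | [], _ => []
  | r :: rs, free =>
    match nearestFree k pos free r with
    | none => []
    | some t => t :: greedyRun k pos rs (free.erase t)

/-- The total cost incurred by GRDY on the request list `rs`. -/
noncomputable def greedyCost (k : ℕ) (pos : Fin k → ℝ) (rs : List ℝ) : ℝ :=
  ((rs.zip (greedyRun k pos rs Finset.univ)).map (fun p => |p.1 - pos p.2|)).sum

def equidistant (k : ℕ) (j : Fin k) : ℝ := (j : ℕ)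

noncomputable def greedyRunCost (k : ℕ) (pos : Fin k → ℝ) (rs : List ℝ)
    (free : Finset (Fin k)) : ℝ :=
  ((rs.zip (greedyRun k pos rs free)).map (fun p => |p.1 - pos p.2|)).sum

/-- The servers GRDY leaves free after serving `1/2, 1, 2, …, m`: it has used `1, …, m`. -/
def freeAfter (k m : ℕ) : Finset (Fin k) :=
  {t | (t : ℕ) = 0 ∨ m < t}

theorem Finset.max_eq_of_isGreatest {α : Type*} [LinearOrder α] {s : Finset α} {a : α}
    (h : IsGreatest (s : Set α) a) : s.max = a :=
  le_antisymm (Finset.max_le fun _ hb => WithBot.coe_le_coe.mpr (h.2 hb)) (Finset.le_max h.1)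

section Greedy

variable {k : ℕ} {pos : Fin k → ℝ} {free : Finset (Fin k)} {r : ℝ} {t : Fin k}

theorem nearestFree_eq_some (ht : t ∈ free)
    (hnear : ∀ t' ∈ free, |r - pos t| ≤ |r - pos t'|)
    (htie : ∀ t' ∈ free, |r - pos t'| ≤ |r - pos t| → t' ≤ t) :
    nearestFree k pos free r = some t :=
  Finset.max_eq_of_isGreatest
    ⟨by simpa using ⟨ht, hnear⟩, fun t' ht' => by
      rw [Finset.mem_coe, Finset.mem_filter] at ht'
      exact htie t' ht'.1 (ht'.2 t ht)⟩

theorem greedyRunCost_cons (rs : List ℝ) (h : nearestFree k pos free r = some t) :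
    greedyRunCost k pos (r :: rs) free = |r - pos t| + greedyRunCost k pos rs (free.erase t) := by
  simp [greedyRunCost, greedyRun, h]

end Greedy

theorem abs_natCast_sub_natCast (a b : ℕ) : |(a : ℝ) - b| = ((a : ℤ) - b).natAbs := by
  rw [Nat.cast_natAbs]; push_cast; rfl

theorem half_le_abs_half_sub_natCast (t : ℕ) : (1 : ℝ) / 2 ≤ |1 / 2 - (t : ℝ)| := by
  rcases Nat.eq_zero_or_pos t with rfl | ht
  · norm_num
  · have : (1 : ℝ) ≤ t := by exact_mod_cast ht
    rw [abs_of_nonpos (by linarith)]; linarith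

section Equidistant

variable {k : ℕ}

theorem univ_erase_one (hk : 2 ≤ k) :
    (Finset.univ : Finset (Fin k)).erase ⟨1, hk⟩ = freeAfter k 1 := by
  ext t
  simp [freeAfter, Fin.ext_iff]
  omega

theorem freeAfter_erase {m : ℕ} (hm : m + 1 < k) :
    (freeAfter k m).erase ⟨m + 1, hm⟩ = freeAfter k (m + 1) := by
  ext t
  simp [freeAfter, Fin.ext_iff]
  omega

/-- Servers `0` and `1` are both at distance `1/2`; the tie goes to `1`. -/
theorem nearestFree_univ_half (hk : 2 ≤ k) :
    nearestFree k (equidistant k) Finset.univ (1 / 2) = some ⟨1, hk⟩ := by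
  have hone : |(1 : ℝ) / 2 - equidistant k ⟨1, hk⟩| = 1 / 2 := by norm_num [equidistant]
  refine nearestFree_eq_some (Finset.mem_univ _)
    (fun t' _ => by rw [hone]; exact half_le_abs_half_sub_natCast t') fun t' _ ht' => ?_
  rw [hone] at ht'
  by_contra! hlt
  have : (2 : ℝ) ≤ (t' : ℕ) := by exact_mod_cast (show 2 ≤ (t' : ℕ) from hlt)
  rw [equidistant, abs_of_nonpos (by linarith)] at ht'
  linarith

/-- For `m = 1` the free servers `0` and `2` tie, and the tie goes to `2`. -/
theorem nearestFree_freeAfter {m : ℕ} (hm : 1 ≤ m) (hmk : m + 1 < k) :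
    nearestFree k (equidistant k) (freeAfter k m) m = some ⟨m + 1, hmk⟩ := by
  refine nearestFree_eq_some (by simp [freeAfter]) (fun t' ht' => ?_) fun t' ht' h => ?_
  all_goals
    simp only [freeAfter, Finset.mem_filter, Finset.mem_univ, true_and] at ht'
    simp only [equidistant, abs_natCast_sub_natCast, Nat.cast_le] at *
  · omega
  · change (t' : ℕ) ≤ m + 1; omega

theorem nearestFree_freeAfter_last (hk : 1 ≤ k) :
    nearestFree k (equidistant k) (freeAfter k (k - 1)) ((k - 1 : ℕ) : ℝ) =
      some ⟨0, hk⟩ := by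
  refine nearestFree_eq_some (by simp [freeAfter]) (fun t' ht' => ?_) fun t' ht' _ => ?_
  all_goals
    simp only [freeAfter, Finset.mem_filter, Finset.mem_univ, true_and] at ht'
    have : (t' : ℕ) = 0 := by omega
  · simp [equidistant, this]
  · simp [Fin.le_def, this]

/-- Each of the requests `m, …, k - 2` moves one step right; the last one, `k - 1`, travels
back to `0`. -/
theorem greedyRunCost_freeAfter (n m : ℕ) (hm : 1 ≤ m) (hk : m + n + 1 = k) :
    greedyRunCost k (equidistant k) ((List.range' m (n + 1)).map (↑)) (freeAfter k m) =
      n + (k - 1) := by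
  induction n generalizing m with
  | zero =>
    have hk1 : 1 ≤ k := by omega
    obtain rfl : m = k - 1 := by omega
    rw [List.range'_one, List.map_singleton,
      greedyRunCost_cons _ (nearestFree_freeAfter_last hk1)]
    simp [greedyRunCost, greedyRun, equidistant, hk1]
  | succ n ih =>
    rw [List.range'_succ, List.map_cons, greedyRunCost_cons _ (nearestFree_freeAfter hm (by omega)),
      freeAfter_erase, ih (m + 1) (by omega) (by omega)]
    simp [equidistant]
    ring

end Equidistant

theorem ofFn_eq_half_cons_range' {n : ℕ} (σ : Fin (n + 1) → ℝ) (h0 : σ 0 = 1 / 2)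
    (hσ : ∀ j : Fin (n + 1), 0 < (j : ℕ) → σ j = (j : ℕ)) :
    List.ofFn σ = 1 / 2 :: (List.range' 1 n).map (↑) := by
  rw [List.ofFn_succ, h0, List.cons.injEq]
  refine ⟨rfl, List.ext_getElem (by simp) fun i hi _ => ?_⟩
  have hin : i + 1 < n + 1 := by simpa using hi
  simp [hσ ⟨i + 1, hin⟩ i.succ_pos, add_comm]

/-- Lower bound `4k − 5` for GRDY on `k ≥ 2` equidistant capacity-1 servers at
positions `0, 1, …, k−1`: on the request sequence `r₁ = 1/2`, `rⱼ = j − 1`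
(`2 ≤ j ≤ k`), GRDY incurs cost `(4k−5)/2` while the optimal offline cost is
exactly `1/2`; hence GRDY's cost is at least `4k−5` times the optimum. -/
theorem stmt_15 (k : ℕ) (hk : 2 ≤ k)
    (pos : Fin k → ℝ) (hpos : ∀ j : Fin k, pos j = (j : ℕ))
    (σ : Fin k → ℝ) (hσ0 : σ ⟨0, by omega⟩ = 1 / 2)
    (hσ : ∀ j : Fin k, 0 < (j : ℕ) → σ j = (j : ℕ)) :
    greedyCost k pos (List.ofFn σ) = (4 * (k : ℝ) - 5) / 2 ∧
    (∀ g : Fin k → Fin k, Function.Injective g →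
      (1 : ℝ) / 2 ≤ ∑ i, |σ i - pos (g i)|) ∧
    (∃ g : Fin k → Fin k, Function.Injective g ∧
      ∑ i, |σ i - pos (g i)| = (1 : ℝ) / 2) ∧
    (4 * (k : ℝ) - 5) * (1 / 2) ≤ greedyCost k pos (List.ofFn σ) := by
  obtain ⟨n, rfl⟩ : ∃ n, k = n + 2 := ⟨k - 2, by omega⟩
  obtain rfl : pos = equidistant (n + 2) := funext hpos
  replace hσ0 : σ 0 = 1 / 2 := hσ0
  have hgreedy : greedyCost (n + 2) (equidistant (n + 2)) (List.ofFn σ) =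
      (4 * ((n + 2 : ℕ) : ℝ) - 5) / 2 := by
    rw [ofFn_eq_half_cons_range' σ hσ0 hσ, greedyCost, ← greedyRunCost,
      greedyRunCost_cons _ (nearestFree_univ_half hk), univ_erase_one,
      greedyRunCost_freeAfter n 1 le_rfl (by omega)]
    norm_num [equidistant]
    ring
  have hopt_ge (g : Fin (n + 2) → Fin (n + 2)) :
      (1 : ℝ) / 2 ≤ ∑ i, |σ i - equidistant _ (g i)| :=
    calc (1 : ℝ) / 2 ≤ |σ 0 - equidistant _ (g 0)| := by
          rw [hσ0]; exact half_le_abs_half_sub_natCast _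
      _ ≤ ∑ i, |σ i - equidistant _ (g i)| :=
        Finset.single_le_sum (f := fun i => |σ i - equidistant _ (g i)|)
          (fun i _ => abs_nonneg _) (Finset.mem_univ _)
  have hopt_id : ∑ i, |σ i - equidistant _ i| = (1 : ℝ) / 2 := by
    have hzero (j : Fin (n + 2)) (hj : j ≠ 0) : |σ j - equidistant _ j| = 0 := by
      rw [hσ j (Fin.pos_iff_ne_zero.mpr hj), equidistant, sub_self, abs_zero]
    rw [Fintype.sum_eq_single 0 hzero, hσ0]
    norm_num [equidistant]
  exact ⟨hgreedy, fun g _ => hopt_ge g, ⟨id, Function.injective_id, hopt_id⟩,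
    by rw [hgreedy]; linarith⟩
end

section
/- Let σ be an opposite request sequence for GRDY on a line with servers s₁ < ⋯ < s_k (capacity 1) whose characteristic permutation is a single cycle with tour T_σ. Then OPT(σ) ≥ (d_min/2)·|cs(σ)|, where d_min = min_j (s_{j+1} − s_j) and cs(σ) is the set of consuming pairs of σ (pairs of requests whose OPT-servers form a conflicting pair in T_σ). -/
/-!
Charge each consuming pair to its earlier request `u`; the later request `v` then has its
GRDY-server between the two servers of `u`. That server was still free when `u` arrived and `u`
lies between its own two servers, so greediness puts `s (g v)` within `2 |σ u - s (o u)|` of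
`s (g u)`, on the side of `s (o u)`. These servers are distinct and at least `d_min` apart, so at
most `2 |σ u - s (o u)| / d_min` pairs are charged to `u`; summing over `u` gives the bound.
-/

open Finset
open scoped Interval

section Spacing

variable {k : ℕ} {s : Fin k → ℝ} {d : ℝ}

theorem mul_le_sub_of_le_gap
    (hgap : ∀ (i : Fin k) (h : (i : ℕ) + 1 < k), d ≤ s ⟨i + 1, h⟩ - s i)
    {a b : Fin k} (hab : a ≤ b) : ((b - a : ℕ) : ℝ) * d ≤ s b - s a := by
  obtain ⟨n, hn⟩ := Nat.exists_eq_add_of_le (Fin.le_def.mp hab)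
  induction n generalizing b with
  | zero =>
    obtain rfl : b = a := Fin.ext (by omega)
    simp
  | succ n ih =>
    have hlt : (a : ℕ) + n < k := by omega
    have hprev := ih (b := ⟨a + n, hlt⟩) (Fin.le_def.mpr (by simp)) rfl
    have hstep := hgap ⟨a + n, hlt⟩ (by simp only; omega)
    have hb : (⟨a + n + 1, by omega⟩ : Fin k) = b := Fin.ext (by simp only; omega)
    simp only [add_tsub_cancel_left, hb] at hprev hstep
    rw [show (b : ℕ) - a = n + 1 by omega]
    push_cast
    linarith

theorem card_sub_one_mul_le_abs_sub (hd : 0 ≤ d)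
    (hgap : ∀ (i : Fin k) (h : (i : ℕ) + 1 < k), d ≤ s ⟨i + 1, h⟩ - s i)
    {B : Finset (Fin k)} (hB : B.Nonempty) {L R : ℝ} (hBLR : ∀ x ∈ B, s x ∈ [[L, R]]) :
    ((#B : ℝ) - 1) * d ≤ |R - L| := by
  set a := B.min' hB
  set b := B.max' hB
  have hab : a ≤ b := B.min'_le_max' hB
  have hcard : #B ≤ (b - a : ℕ) + 1 := by
    have : #B ≤ #(Icc a b) :=
      card_le_card fun x hx => mem_Icc.mpr ⟨B.min'_le x hx, B.le_max' x hx⟩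
    rw [Fin.card_Icc] at this
    have := Fin.le_def.mp hab
    omega
  calc ((#B : ℝ) - 1) * d ≤ ((b - a : ℕ) : ℝ) * d := by
        gcongr
        rw [sub_le_iff_le_add]
        exact_mod_cast hcard
    _ ≤ s b - s a := mul_le_sub_of_le_gap hgap hab
    _ ≤ |s b - s a| := le_abs_self _
    _ ≤ |R - L| := Set.abs_sub_le_of_uIcc_subset_uIcc
        (Set.uIcc_subset_uIcc (hBLR a (B.min'_mem hB)) (hBLR b (B.max'_mem hB)))

end Spacing

theorem mem_uIcc_of_abs_sub_le_abs_sub {a b c x : ℝ} (hc : c ∈ [[a, b]]) (hx : x ∈ [[a, b]])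
    (hnear : |c - b| ≤ |c - x|) : x ∈ [[b, b + 2 * (a - c)]] := by
  rw [Set.mem_uIcc] at *
  rcases hc with ⟨h1, h2⟩ | ⟨h1, h2⟩ <;> rcases hx with ⟨h3, h4⟩ | ⟨h3, h4⟩ <;>
    rcases abs_cases (c - b) with ⟨h5, h5'⟩ | ⟨h5, h5'⟩ <;>
    rcases abs_cases (c - x) with ⟨h6, h6'⟩ | ⟨h6, h6'⟩ <;>
    first
    | exact Or.inl ⟨by linarith, by linarith⟩
    | exact Or.inr ⟨by linarith, by linarith⟩

section ConsumingPairs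

variable {ι : Type*} [LinearOrder ι] {k : ℕ} (s : Fin k → ℝ) (g o : ι → Fin k)

open scoped Classical in
noncomputable def partners [Fintype ι] (u : ι) : Finset ι :=
  {v | u < v ∧ s (g v) ∈ [[s (o u), s (g u)]] ∧ s (g v) ≠ s (g u)}

open scoped Classical in
noncomputable def consumingPairs [Fintype ι] : Finset (ι × ι) :=
  {p | s (o p.1) ≤ s (g p.2) ∧ s (g p.2) < s (g p.1) ∧ s (g p.1) ≤ s (o p.2)}

variable [Fintype ι]

theorem max_mem_partners_min {p : ι × ι} (hp : p ∈ consumingPairs s g o) :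
    max p.1 p.2 ∈ partners s g o (min p.1 p.2) := by
  simp only [consumingPairs, partners, mem_filter, mem_univ, true_and, Set.mem_uIcc] at hp ⊢
  obtain ⟨h1, h2, h3⟩ := hp
  rcases lt_trichotomy p.1 p.2 with h | h | h
  · rw [min_eq_left h.le, max_eq_right h.le]
    exact ⟨h, Or.inl ⟨h1, h2.le⟩, h2.ne⟩
  · simp [h] at h2
  · rw [min_eq_right h.le, max_eq_left h.le]
    exact ⟨h, Or.inr ⟨h2.le, h3⟩, h2.ne'⟩

theorem injOn_min_max_consumingPairs :
    Set.InjOn (fun p : ι × ι => (min p.1 p.2, max p.1 p.2)) (consumingPairs s g o) := by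
  intro p hp q hq hpq
  simp only [consumingPairs, coe_filter, mem_univ, true_and, Set.mem_ofPred_eq] at hp hq
  simp only [Prod.mk.injEq] at hpq
  obtain ⟨hmin, hmax⟩ := hpq
  rcases le_total p.1 p.2 with hp12 | hp12 <;> rcases le_total q.1 q.2 with hq12 | hq12 <;>
    simp only [min_eq_left, min_eq_right, max_eq_left, max_eq_right, hp12, hq12] at hmin hmax
  · exact Prod.ext hmin hmax
  · rw [hmin, hmax] at hp; linarith [hp.2.1, hq.2.1]
  · rw [hmin, hmax] at hp; linarith [hp.2.1, hq.2.1]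
  · exact Prod.ext hmax hmin

theorem card_consumingPairs_le_sum_card_partners :
    #(consumingPairs s g o) ≤ ∑ u, #(partners s g o u) := by
  classical
  calc #(consumingPairs s g o)
      ≤ #(univ.filter fun q : ι × ι => q.2 ∈ partners s g o q.1) :=
        card_le_card_of_injOn _ (fun p hp => by simpa using max_mem_partners_min s g o hp)
          (injOn_min_max_consumingPairs s g o)
    _ = ∑ u, #(partners s g o u) := by
        rw [card_filter, Fintype.sum_prod_type]
        simp only [← card_filter, filter_mem_eq_inter, univ_inter]

end ConsumingPairs

section Greedy

variable {ι : Type*} [LinearOrder ι] {k : ℕ} {s : Fin k → ℝ} {σ : ι → ℝ}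
  {g o : ι → Fin k}

theorem mem_uIcc_of_mem_partners [Fintype ι] (hg : Function.Injective g)
    (hgnear : ∀ i t, (∀ j, j < i → g j ≠ t) → |σ i - s (g i)| ≤ |σ i - s t|)
    (hopp : ∀ i, σ i ∈ [[s (g i), s (o i)]]) {u v : ι} (hv : v ∈ partners s g o u) :
    s (g v) ∈ [[s (g u), s (g u) + 2 * (s (o u) - σ u)]] := by
  simp only [partners, mem_filter, mem_univ, true_and] at hv
  obtain ⟨huv, hvI, -⟩ := hv
  have hfree : ∀ j, j < u → g j ≠ g v := fun j hj hjv => (hj.trans huv).ne (hg hjv)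
  exact mem_uIcc_of_abs_sub_le_abs_sub (Set.uIcc_comm (s (g u)) (s (o u)) ▸ hopp u) hvI
    (hgnear u (g v) hfree)

theorem card_partners_mul_le [Fintype ι] {d : ℝ} (hd : 0 ≤ d)
    (hgap : ∀ (i : Fin k) (h : (i : ℕ) + 1 < k), d ≤ s ⟨i + 1, h⟩ - s i)
    (hg : Function.Injective g)
    (hgnear : ∀ i t, (∀ j, j < i → g j ≠ t) → |σ i - s (g i)| ≤ |σ i - s t|)
    (hopp : ∀ i, σ i ∈ [[s (g i), s (o i)]]) (u : ι) :
    #(partners s g o u) * d ≤ 2 * |σ u - s (o u)| := by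
  classical
  set B := insert (g u) ((partners s g o u).image g)
  have hgu : g u ∉ (partners s g o u).image g := by
    simp only [mem_image, partners, mem_filter, mem_univ, true_and, not_exists, not_and]
    exact fun v hv hvu => hv.2.2 (congrArg s hvu)
  have hcard : #B = #(partners s g o u) + 1 := by
    rw [card_insert_of_notMem hgu, card_image_of_injective _ hg]
  have hB : ∀ x ∈ B, s x ∈ [[s (g u), s (g u) + 2 * (s (o u) - σ u)]] := by
    simp only [B, mem_insert, mem_image]
    rintro x (rfl | ⟨v, hv, rfl⟩)
    · exact Set.left_mem_uIcc
    · exact mem_uIcc_of_mem_partners hg hgnear hopp hv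
  have := card_sub_one_mul_le_abs_sub hd hgap (insert_nonempty _ _) hB
  rwa [hcard, Nat.cast_succ, add_sub_cancel_right, add_sub_cancel_left, abs_mul, abs_two,
    abs_sub_comm] at this

end Greedy

theorem stmt_16_general (k : ℕ) (s : Fin k → ℝ) (hs : StrictMono s)
    (σ : Fin k → ℝ) (g o : Fin k → Fin k)
    -- `g` is GRDY's assignment: free, nearest, ties to the largest index
    (hgfree : ∀ i j : Fin k, j < i → g j ≠ g i)
    (hgnear : ∀ i t : Fin k, (∀ j, j < i → g j ≠ t) →
      |σ i - s (g i)| ≤ |σ i - s t|)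
    -- `σ` is opposite w.r.t. GRDY: each request lies between its two servers
    (hopp : ∀ i, (s (g i) ≤ σ i ∧ σ i ≤ s (o i)) ∨
      (s (o i) ≤ σ i ∧ σ i ≤ s (g i))) :
    (sInf {d : ℝ | ∃ i : Fin k, ∃ h : (i : ℕ) + 1 < k,
        d = s ⟨(i : ℕ) + 1, h⟩ - s i} / 2) *
      (Nat.card {p : Fin k × Fin k // s (o p.1) ≤ s (g p.2) ∧
        s (g p.2) < s (g p.1) ∧ s (g p.1) ≤ s (o p.2)} : ℝ) ≤
    ∑ i, |σ i - s (o i)| := by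
  set d := sInf {d : ℝ | ∃ i : Fin k, ∃ h : (i : ℕ) + 1 < k,
    d = s ⟨(i : ℕ) + 1, h⟩ - s i}
  have hgaps_nonneg : ∀ i : Fin k, ∀ h : (i : ℕ) + 1 < k, 0 ≤ s ⟨i + 1, h⟩ - s i :=
    fun i h => sub_nonneg.mpr (hs.monotone (Fin.le_def.mpr (Nat.le_succ _)))
  have hd : 0 ≤ d := Real.sInf_nonneg (by rintro _ ⟨i, h, rfl⟩; exact hgaps_nonneg i h)
  have hgap : ∀ i : Fin k, ∀ h : (i : ℕ) + 1 < k, d ≤ s ⟨i + 1, h⟩ - s i :=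
    fun i h => csInf_le ⟨0, by rintro _ ⟨i, h, rfl⟩; exact hgaps_nonneg i h⟩ ⟨i, h, rfl⟩
  have hg : Function.Injective g :=
    Function.Injective.of_lt_imp_ne fun i j hij => hgfree j i hij
  have hcard : Nat.card {p : Fin k × Fin k // s (o p.1) ≤ s (g p.2) ∧
      s (g p.2) < s (g p.1) ∧ s (g p.1) ≤ s (o p.2)} = #(consumingPairs s g o) := by
    rw [Nat.card_eq_fintype_card, Fintype.card_subtype, consumingPairs]
  rw [hcard]
  calc d / 2 * #(consumingPairs s g o) ≤ d / 2 * ∑ u, #(partners s g o u) := by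
        gcongr
        exact_mod_cast card_consumingPairs_le_sum_card_partners s g o
    _ = ∑ u, #(partners s g o u) * d / 2 := by
        rw [Nat.cast_sum, mul_sum]
        exact sum_congr rfl fun u _ => by ring
    _ ≤ ∑ u, |σ u - s (o u)| := sum_le_sum fun u _ => by
        linarith [card_partners_mul_le hd hgap hg hgnear (fun i => Set.mem_uIcc.mpr (hopp i)) u]

/-- Lemma on consuming pairs for GRDY on a line: let `s 0 < ⋯ < s (k-1)` be
`k ≥ 2` capacity-1 servers, `σ` an opposite request sequence w.r.t. GRDY whose
characteristic permutation `π` (with `π (o i) = g i`, where `g` is GRDY's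
assignment and `o` an optimal assignment) is a single cycle on all servers.
Then `OPT(σ) ≥ (d_min / 2) · |cs(σ)|`, where `d_min = min_j (s (j+1) − s j)`
and `cs(σ)` is the set of consuming pairs `(rᵢ, rⱼ)`, i.e. those pairs whose
OPT-servers form a conflicting pair in the tour:
`s (o i) ≤ s (g j) < s (g i) ≤ s (o j)`. -/
theorem stmt_16 (k : ℕ) (hk : 2 ≤ k) (s : Fin k → ℝ) (hs : StrictMono s)
    (σ : Fin k → ℝ) (g o : Fin k → Fin k)
    -- `g` is GRDY's assignment: free, nearest, ties to the largest index
    (hgfree : ∀ i j : Fin k, j < i → g j ≠ g i)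
    (hgnear : ∀ i t : Fin k, (∀ j, j < i → g j ≠ t) →
      |σ i - s (g i)| ≤ |σ i - s t|)
    (hgtie : ∀ i t : Fin k, (∀ j, j < i → g j ≠ t) →
      |σ i - s t| = |σ i - s (g i)| → t ≤ g i)
    -- `o` is an optimal (offline) assignment
    (ho : Function.Bijective o)
    (hoopt : ∀ f : Fin k → Fin k, Function.Bijective f →
      ∑ i, |σ i - s (o i)| ≤ ∑ i, |σ i - s (f i)|)
    -- `σ` is opposite w.r.t. GRDY: each request lies between its two servers
    (hopp : ∀ i, (s (g i) ≤ σ i ∧ σ i ≤ s (o i)) ∨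
      (s (o i) ≤ σ i ∧ σ i ≤ s (g i)))
    -- the characteristic permutation is a single tour on all the servers
    (π : Equiv.Perm (Fin k)) (hπ : ∀ i, π (o i) = g i)
    (hcyc : ∀ x y : Fin k, ∃ m : ℕ, (π ^ m) x = y) :
    (sInf {d : ℝ | ∃ i : Fin k, ∃ h : (i : ℕ) + 1 < k,
        d = s ⟨(i : ℕ) + 1, h⟩ - s i} / 2) *
      (Nat.card {p : Fin k × Fin k // s (o p.1) ≤ s (g p.2) ∧
        s (g p.2) < s (g p.1) ∧ s (g p.1) ≤ s (o p.2)} : ℝ) ≤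
    ∑ i, |σ i - s (o i)| :=
  stmt_16_general k s hs σ g o hgfree hgnear hopp
end
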